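/- For every partition λ of N, there exists a bijection f : SYT(λ) → SYT(λ) such that for every T ∈ SYT(λ), Asc(T) = HDes(f(T)); in particular, the set-valued statistics Asc and HDes are equidistributed over SYT(λ). -/

import Mathlib

open Finset

/-- The set of cells of the Young diagram with row lengths `lam`
(rows and columns are 0-indexed). -/
def ydCells (lam : List ℕ) : Finset (ℕ × ℕ) :=
  (Finset.range lam.length).biUnion
    (fun r => (Finset.range (lam.getD r 0)).image (fun c => (r, c)))

/-- `lam` is a partition: a weakly decreasing list of positive integers. -/
def IsPartition (lam : List ℕ) : Prop :=
  lam.Pairwise (· ≥ ·) ∧ ∀ x ∈ lam, 0 < x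

/-- A standard Young tableau of shape `lam`: a filling of the cells of `lam` with the
numbers `1, …, lam.sum`, each used exactly once, increasing along rows and columns. -/
structure SYT (lam : List ℕ) where
  entry : ℕ × ℕ → ℕ
  zero_outside : ∀ p, p ∉ ydCells lam → entry p = 0
  bijOn : Set.BijOn entry (ydCells lam : Set (ℕ × ℕ)) (Set.Icc 1 lam.sum)
  row_incr : ∀ r c : ℕ, (r, c + 1) ∈ ydCells lam → entry (r, c) < entry (r, c + 1)
  col_incr : ∀ r c : ℕ, (r + 1, c) ∈ ydCells lam → entry (r, c) < entry (r + 1, c)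

open Classical in
/-- The descent set of a standard Young tableau: those `1 ≤ i ≤ N-1` such that the row of
`i` is strictly above (smaller index than) the row of `i+1`. -/
noncomputable def desSet (lam : List ℕ) (T : SYT lam) : Finset ℕ :=
  (Finset.Icc 1 (lam.sum - 1)).filter (fun i =>
    ∃ p ∈ ydCells lam, ∃ q ∈ ydCells lam,
      T.entry p = i ∧ T.entry q = i + 1 ∧ p.1 < q.1)

open Classical in
/-- The ascent set of a standard Young tableau: those `1 ≤ i ≤ N-1` such that the row of
`i` is strictly below (larger index than) the row of `i+1`. -/
noncomputable def ascSet (lam : List ℕ) (T : SYT lam) : Finset ℕ :=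
  (Finset.Icc 1 (lam.sum - 1)).filter (fun i =>
    ∃ p ∈ ydCells lam, ∃ q ∈ ydCells lam,
      T.entry p = i ∧ T.entry q = i + 1 ∧ q.1 < p.1)

open Classical in
/-- The high descent set: descents `i` such that moreover `i+1` lies strictly to the left
of `i`. -/
noncomputable def hdesSet (lam : List ℕ) (T : SYT lam) : Finset ℕ :=
  (Finset.Icc 1 (lam.sum - 1)).filter (fun i =>
    ∃ p ∈ ydCells lam, ∃ q ∈ ydCells lam,
      T.entry p = i ∧ T.entry q = i + 1 ∧ p.1 < q.1 ∧ q.2 < p.2)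

/-- The number of descents. -/
noncomputable def desNum (lam : List ℕ) (T : SYT lam) : ℕ := (desSet lam T).card

/-- The number of ascents. -/
noncomputable def ascNum (lam : List ℕ) (T : SYT lam) : ℕ := (ascSet lam T).card

/-- The number of high descents. -/
noncomputable def hdesNum (lam : List ℕ) (T : SYT lam) : ℕ := (hdesSet lam T).card

open Classical in
/-- `bounce lam T r s` is the number of `1 ≤ i ≤ N-1` such that `i` lies in (0-indexed)
row `r` and `i+1` lies in (0-indexed) row `s` of `T`. -/
noncomputable def bounce (lam : List ℕ) (T : SYT lam) (r s : ℕ) : ℕ :=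
  ((Finset.Icc 1 (lam.sum - 1)).filter (fun i =>
    ∃ p ∈ ydCells lam, ∃ q ∈ ydCells lam,
      T.entry p = i ∧ T.entry q = i + 1 ∧ p.1 = r ∧ q.1 = s)).card

/-!
For `S ⊆ {1, …, N - 1}` let `σ_S` be the involution of `{1, …, N}` that reverses every maximal
interval `[a, b]` with `a, …, b - 1 ∈ S`. If `S ⊆ Asc T`, the cells holding `a, …, b` form a
chain going strictly north-east, and if `S ⊆ HDes T` one going strictly south-west; either way
no row or column meets such a chain twice, so `σ_S ∘ T` is again standard, and reversing the
chain exchanges its ascents with high descents. Thus `T ↦ σ_S ∘ T` matches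
`{T | S ⊆ Asc T}` with `{T | S ⊆ HDes T}`. Möbius inversion over the subsets of
`{1, …, N - 1}` (downward induction on `S`) turns these equalities into `#{Asc = S} = #{HDes = S}`,
and matching the fibres gives the bijection.
-/

section Runs

variable (S : Finset ℕ)

def runStart (v : ℕ) : ℕ := Nat.find (p := fun a => Ico a v ⊆ S) ⟨v, by simp⟩

def runEnd (v : ℕ) : ℕ :=
  Nat.find (p := fun b => v ≤ b ∧ b ∉ S) <| by
    obtain ⟨b, hb⟩ := Infinite.exists_notMem_finset (S ∪ range v)
    simp only [mem_union, mem_range, not_or, not_lt] at hb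
    exact ⟨b, hb.2, hb.1⟩

def reverseRuns (v : ℕ) : ℕ := runStart S v + runEnd S v - v

variable {S}

lemma runStart_le (v : ℕ) : runStart S v ≤ v := Nat.find_min' _ (by simp)

lemma Ico_runStart_subset (v : ℕ) : Ico (runStart S v) v ⊆ S :=
  Nat.find_spec (p := fun a => Ico a v ⊆ S) _

lemma runStart_le_of_Ico_subset {a v : ℕ} (h : Ico a v ⊆ S) : runStart S v ≤ a :=
  Nat.find_min' _ h

lemma runStart_sub_one_notMem {v : ℕ} (h : runStart S v ≠ 0) : runStart S v - 1 ∉ S := by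
  intro hmem
  have : Ico (runStart S v - 1) v ⊆ S := by
    intro t ht
    rcases eq_or_ne t (runStart S v - 1) with rfl | hne
    · exact hmem
    · exact Ico_runStart_subset v (by simp only [mem_Ico] at ht ⊢; omega)
  have := runStart_le_of_Ico_subset this
  omega

lemma le_runEnd (v : ℕ) : v ≤ runEnd S v :=
  (Nat.find_spec (p := fun b => v ≤ b ∧ b ∉ S) _).1

lemma runEnd_notMem (v : ℕ) : runEnd S v ∉ S :=
  (Nat.find_spec (p := fun b => v ≤ b ∧ b ∉ S) _).2

lemma runEnd_le {v b : ℕ} (hvb : v ≤ b) (hb : b ∉ S) : runEnd S v ≤ b :=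
  Nat.find_min' _ ⟨hvb, hb⟩

lemma Ico_runEnd_subset (v : ℕ) : Ico v (runEnd S v) ⊆ S := by
  intro t ht
  by_contra hts
  have := runEnd_le (mem_Ico.1 ht).1 hts
  simp only [mem_Ico] at ht
  omega

lemma Ico_runStart_runEnd_subset (v : ℕ) : Ico (runStart S v) (runEnd S v) ⊆ S := by
  intro t ht
  rcases lt_or_ge t v with htv | hvt
  · exact Ico_runStart_subset v (by simp only [mem_Ico] at ht ⊢; omega)
  · exact Ico_runEnd_subset v (by simp only [mem_Ico] at ht ⊢; omega)

lemma runStart_runEnd_of_mem_Icc {v w : ℕ} (hw : w ∈ Icc (runStart S v) (runEnd S v)) :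
    runStart S w = runStart S v ∧ runEnd S w = runEnd S v := by
  obtain ⟨haw, hwb⟩ := mem_Icc.1 hw
  have hrun := Ico_runStart_runEnd_subset (S := S) v
  constructor
  · refine le_antisymm (runStart_le_of_Ico_subset ((Ico_subset_Ico_right hwb).trans hrun)) ?_
    by_contra! h
    exact runStart_sub_one_notMem (S := S) (v := v) (by omega)
      (Ico_runStart_subset w (mem_Ico.2 ⟨by omega, by omega⟩))
  · refine le_antisymm (runEnd_le hwb (runEnd_notMem v)) ?_
    by_contra! h
    exact runEnd_notMem w (hrun (by have := le_runEnd (S := S) w; simp only [mem_Ico]; omega))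

lemma reverseRuns_mem_Icc (v : ℕ) : reverseRuns S v ∈ Icc (runStart S v) (runEnd S v) := by
  have := runStart_le (S := S) v
  have := le_runEnd (S := S) v
  simp only [reverseRuns, mem_Icc]
  omega

lemma reverseRuns_involutive : Function.Involutive (reverseRuns S) := by
  intro v
  have hw := reverseRuns_mem_Icc (S := S) v
  obtain ⟨ha, hb⟩ := runStart_runEnd_of_mem_Icc hw
  have := le_runEnd (S := S) v
  rw [mem_Icc, reverseRuns] at hw
  rw [reverseRuns, ha, hb, reverseRuns]
  omega

lemma reverseRuns_zero (h0 : 0 ∉ S) : reverseRuns S 0 = 0 := by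
  have := runEnd_le le_rfl h0
  have := runStart_le (S := S) 0
  simp only [reverseRuns]
  omega

lemma reverseRuns_mapsTo {N : ℕ} (h0 : 0 ∉ S) (hN : N ∉ S) :
    Set.MapsTo (reverseRuns S) (Set.Icc 1 N) (Set.Icc 1 N) := by
  rintro v ⟨h1v, hvN⟩
  have hstart : 1 ≤ runStart S v := by
    by_contra! h
    exact h0 (Ico_runStart_subset v (by simp only [mem_Ico]; omega))
  have hend := runEnd_le hvN hN
  have := mem_Icc.1 (reverseRuns_mem_Icc (S := S) v)
  exact ⟨by omega, by omega⟩

lemma reverseRuns_bijOn {N : ℕ} (h0 : 0 ∉ S) (hN : N ∉ S) :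
    Set.BijOn (reverseRuns S) (Set.Icc 1 N) (Set.Icc 1 N) :=
  Set.InvOn.bijOn ⟨fun v _ => reverseRuns_involutive v, fun v _ => reverseRuns_involutive v⟩
    (reverseRuns_mapsTo h0 hN) (reverseRuns_mapsTo h0 hN)

lemma reverseRuns_lt_reverseRuns {x y : ℕ} (h : ¬ Ico x y ⊆ S) :
    reverseRuns S x < reverseRuns S y := by
  obtain ⟨z, hz, hzS⟩ := not_subset.1 h
  obtain ⟨hxz, hzy⟩ := mem_Ico.1 hz
  have hx := runEnd_le hxz hzS
  have hy : z < runStart S y := by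
    by_contra! h
    exact hzS (Ico_runStart_subset y (mem_Ico.2 ⟨h, hzy⟩))
  have := (mem_Icc.1 (reverseRuns_mem_Icc (S := S) x)).2
  have := (mem_Icc.1 (reverseRuns_mem_Icc (S := S) y)).1
  omega

lemma reverseRuns_succ_of_mem {i : ℕ} (hi : i ∈ S) :
    reverseRuns S i = reverseRuns S (i + 1) + 1 ∧ reverseRuns S (i + 1) ∈ S := by
  have hend : i + 1 ≤ runEnd S i := by
    have := le_runEnd (S := S) i
    have : runEnd S i ≠ i := fun h => runEnd_notMem i (h ▸ hi)
    omega
  have hstart := runStart_le (S := S) i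
  obtain ⟨ha, hb⟩ := runStart_runEnd_of_mem_Icc (S := S) (v := i) (w := i + 1)
    (mem_Icc.2 ⟨by omega, hend⟩)
  simp only [reverseRuns, ha, hb]
  exact ⟨by omega, Ico_runStart_runEnd_subset i (mem_Ico.2 ⟨by omega, by omega⟩)⟩

end Runs

section FiberCounting

variable {X α : Type*} [Fintype X] [DecidableEq α]

lemma card_filter_subset_eq_add_sum (F : X → Finset α) (S : Finset α) {V : Finset (Finset α)}
    (hV : ∀ x, F x ∈ V) :
    #{x | S ⊆ F x} = #{x | F x = S} + ∑ T ∈ V with S ⊂ T, #{x | F x = T} := by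
  classical
  have hsplit : univ.filter (fun x => S ⊆ F x) =
      univ.filter (fun x => F x = S) ∪ univ.filter (fun x => S ⊂ F x) := by
    ext x
    simp only [mem_filter, mem_univ, true_and, mem_union]
    exact ⟨fun h => h.eq_or_ssubset.imp_left Eq.symm,
      fun h => h.elim (fun e => e ▸ subset_rfl) (·.subset)⟩
  have hdisj : Disjoint (univ.filter (fun x => F x = S)) (univ.filter (fun x => S ⊂ F x)) :=
    disjoint_filter.2 fun _ _ h1 h2 => h2.ne h1.symm
  have hmaps : Set.MapsTo F (univ.filter (fun x => S ⊂ F x) : Set X) (V.filter (S ⊂ ·)) :=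
    fun x hx => mem_filter.2 ⟨hV x, (mem_filter.1 hx).2⟩
  rw [hsplit, card_union_of_disjoint hdisj, card_eq_sum_card_fiberwise hmaps]
  refine congrArg _ (sum_congr rfl fun T hT => congrArg card ?_)
  ext x
  simp only [mem_filter, mem_univ, true_and, and_iff_right_iff_imp]
  rintro rfl
  exact (mem_filter.1 hT).2

theorem card_filter_eq_of_card_filter_subset_eq (F G : X → Finset α)
    (h : ∀ S, #{x | S ⊆ F x} = #{x | S ⊆ G x}) (S : Finset α) :
    #{x | F x = S} = #{x | G x = S} := by
  set V := univ.image F ∪ univ.image G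
  have hF : ∀ x, F x ∈ V := fun x => mem_union_left _ (mem_image_of_mem F (mem_univ x))
  have hG : ∀ x, G x ∈ V := fun x => mem_union_right _ (mem_image_of_mem G (mem_univ x))
  by_cases hS : #S ≤ V.sup card
  · refine strongDownwardInduction (p := fun S => #{x | F x = S} = #{x | G x = S})
      (fun S ih _ => ?_) S hS
    have hsum : ∑ T ∈ V with S ⊂ T, #{x | F x = T} = ∑ T ∈ V with S ⊂ T, #{x | G x = T} :=
      sum_congr rfl fun T hT => ih (le_sup (mem_filter.1 hT).1) (mem_filter.1 hT).2
    have := h S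
    rw [card_filter_subset_eq_add_sum F S hF, card_filter_subset_eq_add_sum G S hG, hsum] at this
    omega
  · have hempty : ∀ H : X → Finset α, (∀ x, H x ∈ V) → #{x | H x = S} = 0 := by
      intro H hH
      refine card_eq_zero.2 (filter_eq_empty_iff.2 fun x _ hx => hS ?_)
      rw [← hx]
      exact le_sup (hH x)
    rw [hempty F hF, hempty G hG]

theorem exists_equiv_eq_of_card_filter_subset_eq (F G : X → Finset α)
    (h : ∀ S, #{x | S ⊆ F x} = #{x | S ⊆ G x}) : ∃ e : X ≃ X, ∀ x, G (e x) = F x := by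
  classical
  have hfib (S : Finset α) : Fintype.card {x // F x = S} = Fintype.card {x // G x = S} := by
    simpa only [Fintype.card_subtype] using card_filter_eq_of_card_filter_subset_eq F G h S
  exact ⟨Equiv.ofFiberEquiv fun S => Fintype.equivOfCardEq (hfib S), Equiv.ofFiberEquiv_map _⟩

end FiberCounting

lemma mem_ydCells {lam : List ℕ} {p : ℕ × ℕ} :
    p ∈ ydCells lam ↔ p.1 < lam.length ∧ p.2 < lam.getD p.1 0 := by
  obtain ⟨r, c⟩ := p
  simp [ydCells]

lemma IsPartition.isLowerSet_ydCells {lam : List ℕ} (hlam : IsPartition lam) :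
    IsLowerSet (ydCells lam : Set (ℕ × ℕ)) := by
  intro q p hpq hq
  simp only [mem_coe, mem_ydCells] at hq ⊢
  obtain ⟨hq1, hq2⟩ := hq
  obtain ⟨hrow, hcol⟩ := Prod.le_def.1 hpq
  refine ⟨by omega, lt_of_le_of_lt hcol (lt_of_lt_of_le hq2 ?_)⟩
  rw [List.getD_eq_getElem _ _ hq1, List.getD_eq_getElem _ _ (by omega)]
  exact hlam.1.rel_get_of_le (a := ⟨p.1, by omega⟩) (b := ⟨q.1, hq1⟩) hrow

namespace SYT

variable {lam : List ℕ}

lemma entry_injective : Function.Injective (entry : SYT lam → ℕ × ℕ → ℕ) := by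
  rintro ⟨⟩ ⟨⟩ h
  congr

lemma entry_mem_Icc (T : SYT lam) {p : ℕ × ℕ} (hp : p ∈ ydCells lam) :
    T.entry p ∈ Set.Icc 1 lam.sum :=
  T.bijOn.mapsTo hp

lemma exists_entry_eq (T : SYT lam) {v : ℕ} (hv : v ∈ Set.Icc 1 lam.sum) :
    ∃ p ∈ ydCells lam, T.entry p = v :=
  T.bijOn.surjOn hv

instance : Finite (SYT lam) := by
  refine Finite.of_injective
    (fun T : SYT lam => fun p : ydCells lam => (⟨T.entry p, ?_⟩ : Fin (lam.sum + 1))) ?_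
  · exact Nat.lt_succ_of_le (T.entry_mem_Icc p.2).2
  · intro T U h
    refine entry_injective (funext fun p => ?_)
    by_cases hp : p ∈ ydCells lam
    · simpa using congrFun h ⟨p, hp⟩
    · rw [T.zero_outside p hp, U.zero_outside p hp]

lemma entry_lt_entry_of_snd_lt (hlam : IsPartition lam) (T : SYT lam) {r c c' : ℕ}
    (hc : c < c') (h : (r, c') ∈ ydCells lam) : T.entry (r, c) < T.entry (r, c') := by
  induction c', hc using Nat.le_induction with
  | base => exact T.row_incr r c h
  | succ c' _ ih =>
    have hmem := hlam.isLowerSet_ydCells (show (r, c') ≤ (r, c' + 1) by simp) h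
    exact (ih hmem).trans (T.row_incr r c' h)

lemma entry_lt_entry_of_fst_lt (hlam : IsPartition lam) (T : SYT lam) {r r' c : ℕ}
    (hr : r < r') (h : (r', c) ∈ ydCells lam) : T.entry (r, c) < T.entry (r', c) := by
  induction r', hr using Nat.le_induction with
  | base => exact T.col_incr r c h
  | succ r' _ ih =>
    have hmem := hlam.isLowerSet_ydCells (show (r', c) ≤ (r' + 1, c) by simp) h
    exact (ih hmem).trans (T.col_incr r' c h)

lemma entry_lt_entry (hlam : IsPartition lam) (T : SYT lam) {p q : ℕ × ℕ} (hpq : p < q)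
    (hq : q ∈ ydCells lam) : T.entry p < T.entry q := by
  obtain ⟨r, c⟩ := p
  obtain ⟨r', c'⟩ := q
  have hcorner : (r, c') ∈ ydCells lam :=
    hlam.isLowerSet_ydCells (Prod.mk_le_mk.2 ⟨(Prod.mk_le_mk.1 hpq.le).1, le_rfl⟩) hq
  have hrow : T.entry (r, c) ≤ T.entry (r, c') := by
    rcases (Prod.mk_le_mk.1 hpq.le).2.eq_or_lt with h | h
    · rw [h]
    · exact (T.entry_lt_entry_of_snd_lt hlam h hcorner).le
  have hcol : T.entry (r, c') ≤ T.entry (r', c') := by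
    rcases (Prod.mk_le_mk.1 hpq.le).1.eq_or_lt with h | h
    · rw [h]
    · exact (T.entry_lt_entry_of_fst_lt hlam h hq).le
  rcases Prod.lt_iff.1 hpq with ⟨hr, -⟩ | ⟨-, hc⟩
  · exact hrow.trans_lt (T.entry_lt_entry_of_fst_lt hlam hr hq)
  · exact (T.entry_lt_entry_of_snd_lt hlam hc hcorner).trans_le hcol

lemma snd_lt_snd_of_entry_eq_succ (hlam : IsPartition lam) (T : SYT lam) {p q : ℕ × ℕ}
    (hp : p ∈ ydCells lam) (hpq : T.entry q = T.entry p + 1) (hrow : q.1 < p.1) : p.2 < q.2 := by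
  by_contra! hcol
  have hcorner : (q.1, p.2) ∈ ydCells lam :=
    hlam.isLowerSet_ydCells (Prod.mk_le_mk.2 ⟨hrow.le, le_rfl⟩) hp
  have h1 : T.entry q ≤ T.entry (q.1, p.2) := by
    rcases hcol.eq_or_lt with h | h
    · rw [← h]
    · exact (T.entry_lt_entry hlam (Prod.mk_lt_mk.2 (Or.inr ⟨le_rfl, h⟩)) hcorner).le
  have h2 : T.entry (q.1, p.2) < T.entry p :=
    T.entry_lt_entry hlam (Prod.mk_lt_mk.2 (Or.inl ⟨hrow, le_rfl⟩)) hp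
  omega

lemma mem_ascSet_iff (T : SYT lam) {p q : ℕ × ℕ} (hp : p ∈ ydCells lam) (hq : q ∈ ydCells lam)
    {i : ℕ} (hpi : T.entry p = i) (hqi : T.entry q = i + 1) :
    i ∈ ascSet lam T ↔ q.1 < p.1 := by
  simp only [ascSet, mem_filter, mem_Icc]
  constructor
  · rintro ⟨-, p', hp', q', hq', hp'i, hq'i, h⟩
    rwa [T.bijOn.injOn hp' hp (hp'i.trans hpi.symm),
      T.bijOn.injOn hq' hq (hq'i.trans hqi.symm)] at h
  · obtain ⟨hi, -⟩ := T.entry_mem_Icc hp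
    obtain ⟨-, hiN⟩ := T.entry_mem_Icc hq
    exact fun h => ⟨⟨by omega, by omega⟩, p, hp, q, hq, hpi, hqi, h⟩

lemma mem_hdesSet_iff (T : SYT lam) {p q : ℕ × ℕ} (hp : p ∈ ydCells lam) (hq : q ∈ ydCells lam)
    {i : ℕ} (hpi : T.entry p = i) (hqi : T.entry q = i + 1) :
    i ∈ hdesSet lam T ↔ p.1 < q.1 ∧ q.2 < p.2 := by
  simp only [hdesSet, mem_filter, mem_Icc]
  constructor
  · rintro ⟨-, p', hp', q', hq', hp'i, hq'i, h⟩
    rwa [T.bijOn.injOn hp' hp (hp'i.trans hpi.symm),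
      T.bijOn.injOn hq' hq (hq'i.trans hqi.symm)] at h
  · obtain ⟨hi, -⟩ := T.entry_mem_Icc hp
    obtain ⟨-, hiN⟩ := T.entry_mem_Icc hq
    exact fun h => ⟨⟨by omega, by omega⟩, p, hp, q, hq, hpi, hqi, h⟩

lemma lt_of_forall_step_lt (T : SYT lam) (f : ℕ × ℕ → ℕ) {x y : ℕ}
    (hstep : ∀ t ∈ Ico x y, ∀ p ∈ ydCells lam, ∀ q ∈ ydCells lam,
      T.entry p = t → T.entry q = t + 1 → f q < f p)
    (hxy : x < y) {p q : ℕ × ℕ} (hp : p ∈ ydCells lam) (hq : q ∈ ydCells lam)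
    (hpx : T.entry p = x) (hqy : T.entry q = y) : f q < f p := by
  induction y, hxy using Nat.le_induction generalizing q with
  | base => exact hstep x (by simp) p hp q hq hpx hqy
  | succ y hxy ih =>
    have hx := (T.entry_mem_Icc hp).1
    have hyN := (T.entry_mem_Icc hq).2
    obtain ⟨m, hm, hmy⟩ := T.exists_entry_eq (v := y) ⟨by omega, by omega⟩
    have hpm := ih (fun t ht => hstep t (Ico_subset_Ico_right (by omega) ht)) hm hmy
    exact (hstep y (by simp only [mem_Ico]; omega) m hm q hq hmy hqy).trans hpm

lemma not_Ico_subset_ascSet (hlam : IsPartition lam) (T : SYT lam) {p q : ℕ × ℕ} (hpq : p ≤ q)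
    (hq : q ∈ ydCells lam) (hlt : T.entry p < T.entry q) :
    ¬ Ico (T.entry p) (T.entry q) ⊆ ascSet lam T := fun hsub =>
  (Prod.le_def.1 hpq).1.not_gt <| T.lt_of_forall_step_lt Prod.fst
    (fun _ ht _ hp' _ hq' hp't hq't => (T.mem_ascSet_iff hp' hq' hp't hq't).1 (hsub ht))
    hlt (hlam.isLowerSet_ydCells hpq hq) hq rfl rfl

lemma not_Ico_subset_hdesSet (hlam : IsPartition lam) (T : SYT lam) {p q : ℕ × ℕ} (hpq : p ≤ q)
    (hq : q ∈ ydCells lam) (hlt : T.entry p < T.entry q) :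
    ¬ Ico (T.entry p) (T.entry q) ⊆ hdesSet lam T := fun hsub =>
  (Prod.le_def.1 hpq).2.not_gt <| T.lt_of_forall_step_lt Prod.snd
    (fun _ ht _ hp' _ hq' hp't hq't => ((T.mem_hdesSet_iff hp' hq' hp't hq't).1 (hsub ht)).2)
    hlt (hlam.isLowerSet_ydCells hpq hq) hq rfl rfl

def relabel (T : SYT lam) (σ : ℕ → ℕ) (hσ : Set.BijOn σ (Set.Icc 1 lam.sum) (Set.Icc 1 lam.sum))
    (h0 : σ 0 = 0) (hmono : ∀ p q, p ≤ q → q ∈ ydCells lam → T.entry p < T.entry q →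
      σ (T.entry p) < σ (T.entry q)) : SYT lam where
  entry := σ ∘ T.entry
  zero_outside p hp := by rw [Function.comp_apply, T.zero_outside p hp, h0]
  bijOn := hσ.comp T.bijOn
  row_incr r c h := hmono _ _ (by simp) h (T.row_incr r c h)
  col_incr r c h := hmono _ _ (by simp) h (T.col_incr r c h)

lemma subset_Icc_of_subset_ascSet_or_hdesSet {T : SYT lam} {S : Finset ℕ}
    (hS : S ⊆ ascSet lam T ∨ S ⊆ hdesSet lam T) : S ⊆ Icc 1 (lam.sum - 1) := by
  rcases hS with hS | hS <;> exact hS.trans (filter_subset _ _)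

def reverseRunsOf (hlam : IsPartition lam) (T : SYT lam) (S : Finset ℕ)
    (hS : S ⊆ ascSet lam T ∨ S ⊆ hdesSet lam T) : SYT lam :=
  have hS' := subset_Icc_of_subset_ascSet_or_hdesSet hS
  T.relabel (reverseRuns S)
    (reverseRuns_bijOn (fun h => by simpa using hS' h)
      (fun h => by have := mem_Icc.1 (hS' h); omega))
    (reverseRuns_zero (fun h => by simpa using hS' h))
    (fun p q hpq hq hlt => reverseRuns_lt_reverseRuns fun hsub => by
      rcases hS with hS | hS
      · exact T.not_Ico_subset_ascSet hlam hpq hq hlt (hsub.trans hS)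
      · exact T.not_Ico_subset_hdesSet hlam hpq hq hlt (hsub.trans hS))

lemma reverseRunsOf_entry (hlam : IsPartition lam) (T : SYT lam) (S : Finset ℕ)
    (hS : S ⊆ ascSet lam T ∨ S ⊆ hdesSet lam T) (p : ℕ × ℕ) :
    (T.reverseRunsOf hlam S hS).entry p = reverseRuns S (T.entry p) := rfl

lemma reverseRunsOf_reverseRunsOf (hlam : IsPartition lam) (T : SYT lam) (S : Finset ℕ)
    (hS : S ⊆ ascSet lam T ∨ S ⊆ hdesSet lam T)
    (hS' : S ⊆ ascSet lam (T.reverseRunsOf hlam S hS) ∨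
      S ⊆ hdesSet lam (T.reverseRunsOf hlam S hS)) :
    (T.reverseRunsOf hlam S hS).reverseRunsOf hlam S hS' = T :=
  entry_injective (funext fun _ => reverseRuns_involutive _)

lemma exists_cells_of_mem (hlam : IsPartition lam) (T : SYT lam) {S : Finset ℕ}
    (hS : S ⊆ ascSet lam T ∨ S ⊆ hdesSet lam T) {i : ℕ} (hi : i ∈ S) :
    ∃ j ∈ S, ∃ p ∈ ydCells lam, ∃ q ∈ ydCells lam, T.entry p = j + 1 ∧ T.entry q = j ∧
      (T.reverseRunsOf hlam S hS).entry p = i ∧ (T.reverseRunsOf hlam S hS).entry q = i + 1 := by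
  obtain ⟨hsucc, hj⟩ := reverseRuns_succ_of_mem hi
  have hjI := mem_Icc.1 (subset_Icc_of_subset_ascSet_or_hdesSet hS hj)
  obtain ⟨p, hp, hpj⟩ := T.exists_entry_eq (v := reverseRuns S (i + 1) + 1) ⟨by omega, by omega⟩
  obtain ⟨q, hq, hqj⟩ := T.exists_entry_eq (v := reverseRuns S (i + 1)) ⟨by omega, by omega⟩
  refine ⟨_, hj, p, hp, q, hq, hpj, hqj, ?_, ?_⟩
  · rw [reverseRunsOf_entry, hpj, ← hsucc, reverseRuns_involutive]
  · rw [reverseRunsOf_entry, hqj, reverseRuns_involutive]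

lemma subset_hdesSet_reverseRunsOf (hlam : IsPartition lam) (T : SYT lam) {S : Finset ℕ}
    (hS : S ⊆ ascSet lam T) : S ⊆ hdesSet lam (T.reverseRunsOf hlam S (.inl hS)) := by
  intro i hi
  obtain ⟨j, hj, p, hp, q, hq, hpj, hqj, hpi, hqi⟩ := T.exists_cells_of_mem hlam (.inl hS) hi
  have hrow := (T.mem_ascSet_iff hq hp hqj hpj).1 (hS hj)
  have hcol := T.snd_lt_snd_of_entry_eq_succ hlam hq (hpj.trans (congrArg (· + 1) hqj.symm)) hrow
  exact (mem_hdesSet_iff _ hp hq hpi hqi).2 ⟨hrow, hcol⟩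

lemma subset_ascSet_reverseRunsOf (hlam : IsPartition lam) (T : SYT lam) {S : Finset ℕ}
    (hS : S ⊆ hdesSet lam T) : S ⊆ ascSet lam (T.reverseRunsOf hlam S (.inr hS)) := by
  intro i hi
  obtain ⟨j, hj, p, hp, q, hq, hpj, hqj, hpi, hqi⟩ := T.exists_cells_of_mem hlam (.inr hS) hi
  exact (mem_ascSet_iff _ hp hq hpi hqi).2 ((T.mem_hdesSet_iff hq hp hqj hpj).1 (hS hj)).1

lemma card_filter_subset_ascSet_eq [Fintype (SYT lam)] (hlam : IsPartition lam) (S : Finset ℕ) :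
    #{T : SYT lam | S ⊆ ascSet lam T} = #{T : SYT lam | S ⊆ hdesSet lam T} :=
  card_bij' (fun T hT => T.reverseRunsOf hlam S (.inl (mem_filter.1 hT).2))
    (fun T hT => T.reverseRunsOf hlam S (.inr (mem_filter.1 hT).2))
    (fun T hT => mem_filter.2 ⟨mem_univ _, T.subset_hdesSet_reverseRunsOf hlam (mem_filter.1 hT).2⟩)
    (fun T hT => mem_filter.2 ⟨mem_univ _, T.subset_ascSet_reverseRunsOf hlam (mem_filter.1 hT).2⟩)
    (fun T _ => T.reverseRunsOf_reverseRunsOf hlam S _ _)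
    (fun T _ => T.reverseRunsOf_reverseRunsOf hlam S _ _)

end SYT

/-- Theorem: for every partition `λ` there is a bijection `f` on `SYT(λ)` such that
`Asc(T) = HDes(f(T))` for every `T`; in particular `Asc` and `HDes` are equidistributed
over `SYT(λ)`. -/
theorem exists_bijection_Asc_HDes (lam : List ℕ) (hlam : IsPartition lam) :
    ∃ f : SYT lam → SYT lam, Function.Bijective f ∧
      ∀ T : SYT lam, ascSet lam T = hdesSet lam (f T) := by
  have := Fintype.ofFinite (SYT lam)
  obtain ⟨e, he⟩ := exists_equiv_eq_of_card_filter_subset_eq (ascSet lam) (hdesSet lam)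
    (SYT.card_filter_subset_ascSet_eq hlam)
  exact ⟨e, e.bijective, fun T => (he T).symm⟩
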